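/- Fix s ≥ 0, and let μ be a Borel probability measure on ℝ³ with the following property: there are parameters η > 0 and δ₀ > 0 such that for all 0 < δ ≤ δ₀, the set Z_δ of points z ∈ ℝ³ satisfying H¹({θ ∈ [0, 2π) : μ({z′ ∈ ℝ³ : |π_θ(z) − π_θ(z′)| ≤ δ}) ≥ δ^s}) ≥ δ^η has measure μ(Z_δ) ≤ δ^η. Then dim_H π_θ(spt μ) ≥ s for Lebesgue-almost every θ ∈ [0, 2π). -/

import Mathlib

/-!
Fubini and Chebyshev turn the hypothesis into `(H¹ ⊗ μ){(θ, z) : m_π^δ(π_θ z) ≥ δ^s} ≲ δ^η`,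
which is summable along the dyadic scales `δ_k = δ₀ 2⁻ᵏ`. By Borel–Cantelli, for a.e. `θ` and
`μ`-a.e. `z` the slab around `z` has mass `< δ_k^s` for all large `k`. On a set `S ⊆ spt μ` of
positive measure where "large" is uniform, the push-forward of `μ|_S` under `π_θ` then satisfies
the Frostman condition `ν(B(x, r)) ≲ r^s` for small `r`, and the mass distribution principle
gives `dim_H π_θ(S) ≥ s`.
-/

open MeasureTheory Metric Real
open Filter Topology ENNReal

/-- `ℝ³` as a Euclidean space. -/
noncomputable abbrev E3 := EuclideanSpace ℝ (Fin 3)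

/-- The vector `(a, b, c) ∈ ℝ³`. -/
noncomputable def vec3 (a b c : ℝ) : E3 := (WithLp.equiv 2 (Fin 3 → ℝ)).symm ![a, b, c]

/-- The unit vector `γ(θ) = (cos θ, sin θ, 1)/√2`. -/
noncomputable def gam (θ : ℝ) : E3 := (Real.sqrt 2)⁻¹ • vec3 (Real.cos θ) (Real.sin θ) 1

/-- The orthogonal projection `π_θ` of `ℝ³` onto the plane `γ(θ)^⊥`,
viewed as a map `ℝ³ → ℝ³`. -/
noncomputable def projθ (θ : ℝ) (z : E3) : E3 := (Submodule.orthogonalProjectionOnto (ℝ ∙ gam θ)ᗮ z : E3)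

/-- The (closed) support of a measure `μ`: the set of points all of whose neighbourhoods
have positive measure. -/
def sptMeasure (μ : Measure E3) : Set E3 := {z | ∀ r : ℝ, 0 < r → 0 < μ (ball z r)}

theorem measure_le_mul_ediam_rpow {X : Type*} [PseudoMetricSpace X] [MeasurableSpace X]
    {ν : Measure X} {s C r₀ : ℝ} (hs : 0 < s) (hC : 0 ≤ C)
    (hball : ∀ x r, 0 < r → r ≤ r₀ → ν (closedBall x r) ≤ ENNReal.ofReal (C * r ^ s))
    {t : Set X} (ht : ediam t < ENNReal.ofReal r₀) :
    ν t ≤ ENNReal.ofReal C * ediam t ^ s := by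
  rcases t.eq_empty_or_nonempty with rfl | ⟨x, hx⟩
  · simp
  have hd : ediam t ≠ ∞ := ht.ne_top
  set d := (ediam t).toReal
  have hdr₀ : d < r₀ := toReal_lt_of_lt_ofReal ht
  -- `t` lies in every closed ball about `x` of radius `r > d`; let `r` decrease to `d`.
  have hcover : ∀ r ∈ Set.Ioo d r₀, ν t ≤ ENNReal.ofReal (C * r ^ s) := by
    rintro r ⟨hdr, hrr₀⟩
    refine (measure_mono fun y hy => ?_).trans (hball x r (toReal_nonneg.trans_lt hdr) hrr₀.le)
    rw [mem_closedBall, ← ENNReal.ofReal_le_ofReal_iff (toReal_nonneg.trans hdr.le),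
      ← edist_dist]
    refine (edist_le_ediam_of_mem hy hx).trans ?_
    rw [← ofReal_toReal hd]
    exact ofReal_le_ofReal hdr.le
  have hcont : Continuous fun r : ℝ => ENNReal.ofReal (C * r ^ s) :=
    ENNReal.continuous_ofReal.comp (continuous_const.mul (continuous_rpow_const hs.le))
  calc ν t ≤ ENNReal.ofReal (C * d ^ s) :=
        ge_of_tendsto (hcont.tendsto d |>.mono_left nhdsWithin_le_nhds)
          (eventually_of_mem (Ioo_mem_nhdsGT hdr₀) hcover)
    _ = ENNReal.ofReal C * ediam t ^ s := by
        rw [ENNReal.ofReal_mul hC, ← ofReal_rpow_of_nonneg toReal_nonneg hs.le, ofReal_toReal hd]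

theorem le_dimH_of_measure_closedBall_le {X : Type*} [MetricSpace X] [MeasurableSpace X]
    [BorelSpace X] {ν : Measure X} {s C r₀ : ℝ} (hs : 0 < s) (hC : 0 < C) (hr₀ : 0 < r₀)
    (hball : ∀ x r, 0 < r → r ≤ r₀ → ν (closedBall x r) ≤ ENNReal.ofReal (C * r ^ s))
    {E : Set X} (hE : ν E ≠ 0) : ENNReal.ofReal s ≤ dimH E := by
  have hν : ν ≤ ENNReal.ofReal C • μH[s] :=
    (Measure.le_mkMetric _ ν (ENNReal.ofReal (r₀ / 2)) (by positivity) fun t ht =>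
      measure_le_mul_ediam_rpow hs hC.le hball
        (ht.trans_lt ((ofReal_lt_ofReal_iff hr₀).2 (half_lt_self hr₀)))).trans
    (Measure.mkMetric_mono_smul ofReal_ne_top (by positivity) (.of_forall fun _ => le_rfl))
  have hE' : μH[s.toNNReal] E ≠ 0 := by
    rw [coe_toNNReal _ hs.le]
    exact fun h0 => hE (nonpos_iff_eq_zero.1 ((hν E).trans_eq (by simp [h0])))
  exact le_dimH_of_hausdorffMeasure_ne_zero hE'

theorem exists_measure_setOf_forall_ge_ne_zero {α : Type*} [MeasurableSpace α] {μ : Measure α}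
    (hμ : μ ≠ 0) {P : α → ℕ → Prop} (h : ∀ᵐ z ∂μ, ∀ᶠ k in atTop, P z k) :
    ∃ K, μ {z | ∀ k ≥ K, P z k} ≠ 0 := by
  by_contra! hK
  have hnull : ∀ᵐ z ∂μ, z ∉ ⋃ K, {z | ∀ k ≥ K, P z k} :=
    measure_eq_zero_iff_ae_notMem.1 (measure_iUnion_null hK)
  have hfalse : ∀ᵐ _ ∂μ, False := by
    filter_upwards [h, hnull] with z hz hz'
    exact hz' (Set.mem_iUnion.2 (eventually_atTop.1 hz))
  exact hμ (ae_eq_bot.1 (eventually_false_iff_eq_bot.1 hfalse))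

theorem le_rpow_of_monotone_of_dyadic {m : ℝ → ℝ≥0∞} (hm : Monotone m) {s c : ℝ} (hs : 0 ≤ s)
    (hc : 0 < c) {K : ℕ} (hK : ∀ k ≥ K, m (c * 2⁻¹ ^ k) ≤ ENNReal.ofReal ((c * 2⁻¹ ^ k) ^ s))
    {δ : ℝ} (hδ : 0 < δ) (hδK : δ ≤ c * 2⁻¹ ^ K) :
    m δ ≤ ENNReal.ofReal (2 ^ s * δ ^ s) := by
  have hδc : δ / c ≤ 2⁻¹ ^ K := by rwa [div_le_iff₀' hc]
  obtain ⟨n, hn, hn'⟩ := exists_nat_pow_near_of_lt_one (div_pos hδ hc)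
    (hδc.trans (pow_le_one₀ (by norm_num) (by norm_num))) (by norm_num : (0 : ℝ) < 2⁻¹)
    (by norm_num)
  have hKn : K ≤ n := Nat.lt_succ_iff.1 <|
    (pow_lt_pow_iff_right_of_lt_one₀ (by norm_num) (by norm_num)).1 (hn.trans_le hδc)
  have hδn : δ ≤ c * 2⁻¹ ^ n := by rwa [div_le_iff₀' hc] at hn'
  have hnδ : c * 2⁻¹ ^ n ≤ 2 * δ := by
    rw [lt_div_iff₀' hc, pow_succ] at hn
    linarith
  calc m δ ≤ m (c * 2⁻¹ ^ n) := hm hδn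
    _ ≤ ENNReal.ofReal ((c * 2⁻¹ ^ n) ^ s) := hK n hKn
    _ ≤ ENNReal.ofReal ((2 * δ) ^ s) := ofReal_le_ofReal (rpow_le_rpow (by positivity) hnδ hs)
    _ = ENNReal.ofReal (2 ^ s * δ ^ s) := by rw [mul_rpow zero_le_two hδ.le]

theorem map_restrict_closedBall_le {X Y : Type*} [MeasurableSpace X] [PseudoMetricSpace Y]
    [MeasurableSpace Y] [OpensMeasurableSpace Y] {f : X → Y} (hf : Measurable f) (μ : Measure X)
    {S : Set X} {C s δ₁ : ℝ}
    (hS : ∀ z ∈ S, ∀ δ, 0 < δ → δ ≤ δ₁ → μ (f ⁻¹' closedBall (f z) δ) ≤ ENNReal.ofReal (C * δ ^ s))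
    (y : Y) {r : ℝ} (hr : 0 < r) (hr₁ : 2 * r ≤ δ₁) :
    (μ.restrict S).map f (closedBall y r) ≤ ENNReal.ofReal (C * 2 ^ s * r ^ s) := by
  rw [Measure.map_apply hf measurableSet_closedBall,
    Measure.restrict_apply (hf measurableSet_closedBall)]
  rcases (f ⁻¹' closedBall y r ∩ S).eq_empty_or_nonempty with h | ⟨z, hzy, hzS⟩
  · simp [h]
  have hsub : f ⁻¹' closedBall y r ∩ S ⊆ f ⁻¹' closedBall (f z) (2 * r) := fun z' hz' =>
    calc dist (f z') (f z) ≤ dist (f z') y + dist (f z) y := dist_triangle_right _ _ _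
      _ ≤ 2 * r := by linarith [mem_closedBall.1 hz'.1, mem_closedBall.1 hzy]
  calc μ (f ⁻¹' closedBall y r ∩ S) ≤ μ (f ⁻¹' closedBall (f z) (2 * r)) := measure_mono hsub
    _ ≤ ENNReal.ofReal (C * (2 * r) ^ s) := hS z hzS _ (by positivity) hr₁
    _ = ENNReal.ofReal (C * 2 ^ s * r ^ s) := by rw [mul_rpow zero_le_two hr.le, mul_assoc]

theorem le_dimH_image_of_ae_eventually_measure_preimage_closedBall_le {X Y : Type*}
    [MeasurableSpace X] [MetricSpace Y] [MeasurableSpace Y] [BorelSpace Y] {f : X → Y}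
    (hf : Measurable f) {μ : Measure X} (hμ : μ ≠ 0) {s c : ℝ} (hs : 0 < s) (hc : 0 < c)
    {E : Set X} (hE : ∀ᵐ z ∂μ, z ∈ E)
    (h : ∀ᵐ z ∂μ, ∀ᶠ k in atTop,
      μ (f ⁻¹' closedBall (f z) (c * 2⁻¹ ^ k)) ≤ ENNReal.ofReal ((c * 2⁻¹ ^ k) ^ s)) :
    ENNReal.ofReal s ≤ dimH (f '' E) := by
  obtain ⟨K, hK⟩ := exists_measure_setOf_forall_ge_ne_zero hμ
    ((hE.and h).mono fun _ hz => (eventually_const.2 hz.1).and hz.2)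
  set S := {z | ∀ k ≥ K, z ∈ E ∧
    μ (f ⁻¹' closedBall (f z) (c * 2⁻¹ ^ k)) ≤ ENNReal.ofReal ((c * 2⁻¹ ^ k) ^ s)}
  have hSE : S ⊆ E := fun z hz => (hz K le_rfl).1
  have hball := map_restrict_closedBall_le hf μ (S := S) fun z hz δ hδ hδK =>
    le_rpow_of_monotone_of_dyadic
      (fun _ _ hab => measure_mono (Set.preimage_mono (closedBall_subset_closedBall hab)))
      hs.le hc (fun k hk => (hz k hk).2) hδ hδK
  have hS : (μ.restrict S).map f (f '' S) ≠ 0 := fun h0 => hK <| by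
    simpa [h0] using Measure.le_map_apply_image (μ := μ.restrict S) hf.aemeasurable S
  refine (le_dimH_of_measure_closedBall_le hs (by positivity) (by positivity : 0 < c * 2⁻¹ ^ K / 2)
    (fun y r hr hrK => hball y hr (by linarith)) hS).trans (dimH_mono (Set.image_mono hSE))

theorem prod_apply_le_measure_univ_mul_add {α β : Type*} [MeasurableSpace α] [MeasurableSpace β]
    (ρ : Measure α) [SFinite ρ] (μ : Measure β) [SFinite μ] {A : Set (α × β)}
    (hA : MeasurableSet A) (a : ℝ≥0∞) :
    ρ.prod μ A ≤ ρ Set.univ * μ {z | a ≤ ρ ((fun θ => (θ, z)) ⁻¹' A)} + a * μ Set.univ := by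
  set g := fun z => ρ ((fun θ => (θ, z)) ⁻¹' A)
  have hZ : MeasurableSet {z | a ≤ g z} :=
    measurableSet_le measurable_const (measurable_measure_prodMk_right hA)
  have hg : ∀ z, g z ≤ {z | a ≤ g z}.indicator (fun _ => ρ Set.univ) z + a := fun z => by
    by_cases hz : a ≤ g z
    · rw [Set.indicator_of_mem (show z ∈ {z | a ≤ g z} from hz)]
      exact (measure_mono (Set.subset_univ _)).trans le_self_add
    · rw [Set.indicator_of_notMem (show z ∉ {z | a ≤ g z} from hz), zero_add]
      exact (not_le.1 hz).le
  calc ρ.prod μ A = ∫⁻ z, g z ∂μ := Measure.prod_apply_symm hA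
    _ ≤ ∫⁻ z, ({z | a ≤ g z}.indicator (fun _ => ρ Set.univ) z + a) ∂μ := lintegral_mono hg
    _ = ρ Set.univ * μ {z | a ≤ g z} + a * μ Set.univ := by
      rw [lintegral_add_right _ measurable_const, lintegral_indicator_const hZ, lintegral_const]

theorem ae_eventually_notMem_of_le_geometric {α : Type*} [MeasurableSpace α] {μ : Measure α}
    {A : ℕ → Set α} {C r : ℝ≥0∞} (hC : C ≠ ∞) (hr : r < 1) (hA : ∀ k, μ (A k) ≤ C * r ^ k) :
    ∀ᵐ x ∂μ, ∀ᶠ k in atTop, x ∉ A k := by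
  refine ae_eventually_notMem (ne_top_of_le_ne_top ?_ (ENNReal.tsum_le_tsum hA))
  rw [ENNReal.tsum_mul_left, tsum_geometric]
  exact mul_ne_top hC (inv_ne_top.2 (tsub_pos_of_lt hr).ne')

theorem norm_gam (θ : ℝ) : ‖gam θ‖ = 1 := by
  have h2 : ‖vec3 (cos θ) (sin θ) 1‖ = √2 := by
    rw [EuclideanSpace.norm_eq]
    congr 1
    simp [vec3, Fin.sum_univ_three, sq_abs]
    nlinarith [sin_sq_add_cos_sq θ]
  rw [gam, norm_smul, h2, norm_inv, norm_of_nonneg (sqrt_nonneg 2)]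
  exact inv_mul_cancel₀ (by positivity)

theorem projθ_eq_sub_inner_smul (θ : ℝ) (z : E3) :
    projθ θ z = z - inner ℝ (gam θ) z • gam θ := by
  change (ℝ ∙ gam θ)ᗮ.starProjection z = _
  rw [Submodule.starProjection_orthogonal_val, Submodule.starProjection_singleton, norm_gam]
  norm_num

theorem continuous_gam : Continuous gam := by
  have : Continuous fun θ : ℝ => ![cos θ, sin θ, 1] :=
    continuous_pi fun i => by fin_cases i <;> simp <;> fun_prop
  exact ((PiLp.continuous_toLp 2 (fun _ : Fin 3 => ℝ)).comp this).const_smul (√2)⁻¹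

theorem continuous_projθ : Continuous fun p : ℝ × E3 => projθ p.1 p.2 := by
  simp only [projθ_eq_sub_inner_smul]
  have hg : Continuous fun p : ℝ × E3 => gam p.1 := continuous_gam.comp continuous_fst
  exact continuous_snd.sub ((hg.inner (𝕜 := ℝ) continuous_snd).smul hg)

theorem measurable_measure_setOf_norm_projθ_sub_le (μ : Measure E3) [SFinite μ] (δ : ℝ) :
    Measurable fun p : ℝ × E3 => μ {z' | ‖projθ p.1 p.2 - projθ p.1 z'‖ ≤ δ} := by
  have hc : Continuous fun q : (ℝ × E3) × E3 => ‖projθ q.1.1 q.1.2 - projθ q.1.1 q.2‖ :=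
    ((continuous_projθ.comp continuous_fst).sub
      (continuous_projθ.comp (continuous_fst.fst.prodMk continuous_snd))).norm
  exact measurable_measure_prodMk_left (measurableSet_le hc.measurable measurable_const)

theorem preimage_projθ_closedBall (θ : ℝ) (z : E3) (δ : ℝ) :
    projθ θ ⁻¹' closedBall (projθ θ z) δ = {z' | ‖projθ θ z - projθ θ z'‖ ≤ δ} := by
  ext z'
  simp [dist_eq_norm, norm_sub_rev]

theorem sptMeasure_eq_support (μ : Measure E3) : sptMeasure μ = μ.support := by
  ext z
  exact nhds_basis_ball.mem_measureSupport.symm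

theorem prod_measure_setOf_multiplicity_ge_le {s η δ : ℝ} (μ : Measure E3) [IsProbabilityMeasure μ]
    (hZ : μ {z : E3 | ENNReal.ofReal (δ ^ η) ≤
        volume {θ ∈ Set.Ico (0 : ℝ) (2 * π) |
          ENNReal.ofReal (δ ^ s) ≤ μ {z' : E3 | ‖projθ θ z - projθ θ z'‖ ≤ δ}}}
      ≤ ENNReal.ofReal (δ ^ η)) :
    (volume.restrict (Set.Ico (0 : ℝ) (2 * π))).prod μ
        {p : ℝ × E3 | ENNReal.ofReal (δ ^ s) ≤ μ {z' | ‖projθ p.1 p.2 - projθ p.1 z'‖ ≤ δ}}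
      ≤ (ENNReal.ofReal (2 * π) + 1) * ENNReal.ofReal (δ ^ η) := by
  have hA : MeasurableSet
      {p : ℝ × E3 | ENNReal.ofReal (δ ^ s) ≤ μ {z' | ‖projθ p.1 p.2 - projθ p.1 z'‖ ≤ δ}} :=
    measurableSet_le measurable_const (measurable_measure_setOf_norm_projθ_sub_le μ δ)
  refine (prod_apply_le_measure_univ_mul_add _ μ hA (ENNReal.ofReal (δ ^ η))).trans ?_
  have hslice : ∀ z, volume.restrict (Set.Ico (0 : ℝ) (2 * π)) ((fun θ => (θ, z)) ⁻¹'
      {p : ℝ × E3 | ENNReal.ofReal (δ ^ s) ≤ μ {z' | ‖projθ p.1 p.2 - projθ p.1 z'‖ ≤ δ}}) =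
      volume {θ ∈ Set.Ico (0 : ℝ) (2 * π) |
        ENNReal.ofReal (δ ^ s) ≤ μ {z' : E3 | ‖projθ θ z - projθ θ z'‖ ≤ δ}} := fun z => by
    rw [Measure.restrict_apply (hA.preimage measurable_prodMk_right), Set.inter_comm]
    rfl
  simp_rw [hslice, Measure.restrict_apply_univ, volume_Ico, sub_zero, measure_univ, mul_one]
  calc ENNReal.ofReal (2 * π) * _ + ENNReal.ofReal (δ ^ η)
      ≤ ENNReal.ofReal (2 * π) * ENNReal.ofReal (δ ^ η) + ENNReal.ofReal (δ ^ η) := by gcongr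
    _ = (ENNReal.ofReal (2 * π) + 1) * ENNReal.ofReal (δ ^ η) := by ring

/-- **Lemma 3.4 of the paper.** Fix `s ≥ 0` and let `μ` be a Borel
probability measure on `ℝ³` such that, for some `η > 0` and `δ₀ > 0`, and for every
`0 < δ ≤ δ₀`, the set `Z_δ` of points `z` satisfying
`H¹({θ ∈ [0,2π) : m_π^δ(π_θ(z)) ≥ δ^s}) ≥ δ^η` has measure `μ(Z_δ) ≤ δ^η`.
Then `dim_H π_θ(spt μ) ≥ s` for almost every `θ ∈ [0, 2π)`. -/
theorem stmt11 (s : ℝ) (hs : 0 ≤ s) (μ : Measure E3) [IsProbabilityMeasure μ]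
    (h : ∃ η > (0 : ℝ), ∃ δ₀ > (0 : ℝ), ∀ δ : ℝ, 0 < δ → δ ≤ δ₀ →
      μ {z : E3 |
          ENNReal.ofReal (δ ^ η) ≤
            volume {θ ∈ Set.Ico (0 : ℝ) (2 * π) |
              ENNReal.ofReal (δ ^ s) ≤ μ {z' : E3 | ‖projθ θ z - projθ θ z'‖ ≤ δ}}}
        ≤ ENNReal.ofReal (δ ^ η)) :
    ∀ᵐ θ ∂(volume.restrict (Set.Ico (0 : ℝ) (2 * π))),
      ENNReal.ofReal s ≤ dimH (projθ θ '' sptMeasure μ) := by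
  rcases hs.eq_or_lt with rfl | hs
  · exact Eventually.of_forall fun θ => by simp
  obtain ⟨η, hη, δ₀, hδ₀, hZ⟩ := h
  set δ : ℕ → ℝ := fun k => δ₀ * 2⁻¹ ^ k
  have hbad : ∀ k, (volume.restrict (Set.Ico (0 : ℝ) (2 * π))).prod μ
      {p : ℝ × E3 | ENNReal.ofReal (δ k ^ s) ≤ μ {z' | ‖projθ p.1 p.2 - projθ p.1 z'‖ ≤ δ k}}
      ≤ (ENNReal.ofReal (2 * π) + 1) * ENNReal.ofReal (δ₀ ^ η) * ENNReal.ofReal (2⁻¹ ^ η) ^ k :=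
    fun k => by
      refine (prod_measure_setOf_multiplicity_ge_le μ (hZ (δ k) (by positivity) ?_)).trans_eq ?_
      · exact mul_le_of_le_one_right hδ₀.le (pow_le_one₀ (by norm_num) (by norm_num))
      · rw [mul_assoc, ← ofReal_pow (by positivity), ← ENNReal.ofReal_mul (by positivity),
          rpow_pow_comm (by norm_num : (0 : ℝ) ≤ 2⁻¹), ← mul_rpow hδ₀.le (by positivity)]
  have hBC := ae_eventually_notMem_of_le_geometric (by finiteness)
    (ofReal_lt_one.2 (rpow_lt_one (by norm_num) (by norm_num) hη)) hbad
  filter_upwards [Measure.ae_ae_of_ae_prod hBC] with θ hθ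
  refine le_dimH_image_of_ae_eventually_measure_preimage_closedBall_le
    (f := projθ θ) (continuous_projθ.comp (Continuous.prodMk_right θ)).measurable
    (IsProbabilityMeasure.ne_zero μ) hs hδ₀ (sptMeasure_eq_support μ ▸ Measure.support_mem_ae) ?_
  filter_upwards [hθ] with z hz
  filter_upwards [hz] with k hk
  rw [preimage_projθ_closedBall]
  exact (not_le.1 hk).le
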